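/- Let p be a prime, G cyclic of order p, and M a finite Z_p[G]-module annihilated by the algebraic norm ν = 1 + σ + ... + σ^{p-1}. Then the p-rank of M satisfies rk_p(M) ≤ (p-1)·rk_p(M^G), where rk_p denotes dim over F_p of M/M^p and M^G is the submodule of G-fixed points. -/

import Mathlib

open scoped TensorProduct

/-- The `p`-rank of an additive abelian group: `dim_{𝔽_p} (M / pM)`,
realized as `dim_{𝔽_p} (𝔽_p ⊗_ℤ M)`. -/
noncomputable def pRankAdd (p : ℕ) (M : Type*) [AddCommGroup M] : ℕ :=
  Module.finrank (ZMod p) ((ZMod p) ⊗[ℤ] M)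

/-!
Put `t = 1 - σ`. Over `𝔽_p` we have `(1 - X)^(p-1) = 1 + X + ⋯ + X^(p-1)`, because both sides
times `1 - X` equal `1 - X^p`. Hence `ν = 0` forces `t^(p-1) ∈ p · End(M)`, so `t^(p-1) M ⊆ pM`
and `|M/pM| ≤ |M/t^(p-1)M| = |ker t^(p-1)| ≤ |ker t|^(p-1)`. On `ker t = M^G` the norm acts as
multiplication by `p`, so `M^G` is elementary abelian and `|M^G| = p^(rk_p M^G)`.
-/

open Polynomial Pointwise

section PRank

variable (p : ℕ) [Fact p.Prime] (A : Type*) [AddCommGroup A] [Finite A]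

theorem pow_pRankAdd_eq_card_quotSMulTop :
    p ^ pRankAdd p A = Nat.card (QuotSMulTop (p : ℤ) A) := by
  let e : ZMod p ⊗[ℤ] A ≃ₗ[ℤ] QuotSMulTop (p : ℤ) A :=
    TensorProduct.congr (Int.quotientSpanNatEquivZMod p).symm.toIntLinearEquiv
      (LinearEquiv.refl ℤ A) ≪≫ₗ (QuotSMulTop.equivQuotTensor (p : ℤ) A).symm
  have : Finite (QuotSMulTop (p : ℤ) A) := .of_surjective _ (Submodule.mkQ_surjective _)
  have : Finite (ZMod p ⊗[ℤ] A) := .of_equiv _ e.toEquiv.symm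
  have := Fintype.ofFinite (ZMod p ⊗[ℤ] A)
  rw [← Nat.card_congr e.toEquiv, Nat.card_eq_fintype_card,
    Module.card_eq_pow_finrank (K := ZMod p), ZMod.card, pRankAdd]

theorem pow_pRankAdd_eq_card_of_nsmul_eq_zero (hA : ∀ a : A, p • a = 0) :
    p ^ pRankAdd p A = Nat.card A := by
  have hbot : (p : ℤ) • (⊤ : Submodule ℤ A) = ⊥ := by
    rw [eq_bot_iff]
    rintro _ ⟨a, -, rfl⟩
    simp [hA a]
  rw [pow_pRankAdd_eq_card_quotSMulTop, Nat.card_congr (Submodule.quotEquivOfEqBot _ hbot).toEquiv]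

variable {A} in
theorem pow_pRankAdd_le_card_quotient {R : Type*} [Ring R] [Module R A] (N : Submodule R A)
    (hN : ∀ x ∈ N, ∃ y, p • y = x) : p ^ pRankAdd p A ≤ Nat.card (A ⧸ N) := by
  have hle : N.restrictScalars ℤ ≤ (p : ℤ) • ⊤ := fun x hx ↦ by
    obtain ⟨y, rfl⟩ := hN x hx
    exact ⟨y, trivial, by simp⟩
  have : Finite (A ⧸ N.restrictScalars ℤ) := .of_surjective _ (Submodule.mkQ_surjective _)
  rw [pow_pRankAdd_eq_card_quotSMulTop,
    ← Nat.card_congr (Submodule.Quotient.restrictScalarsEquiv ℤ N).toEquiv]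
  exact Nat.card_le_card_of_surjective _ (Submodule.factor_surjective hle)

end PRank

section Card

variable {R M N P : Type*} [Ring R] [AddCommGroup M] [Module R M] [AddCommGroup N] [Module R N]
  [AddCommGroup P] [Module R P] [Finite M]

theorem LinearMap.card_quotient_range_eq_card_ker (f : M →ₗ[R] M) :
    Nat.card (M ⧸ range f) = Nat.card (ker f) :=
  AddSubgroup.index_range (f := f.toAddMonoidHom)

theorem LinearMap.card_ker_comp_le [Finite N] (f : N →ₗ[R] P) (g : M →ₗ[R] N) :
    Nat.card (ker (f ∘ₗ g)) ≤ Nat.card (ker g) * Nat.card (ker f) := by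
  let h : ker (f ∘ₗ g) →ₗ[R] ker f := g.restrict fun _ hx ↦ hx
  have hker : Nat.card (ker h) ≤ Nat.card (ker g) :=
    Nat.card_le_card_of_injective (fun x ↦ ⟨x.1.1, congr_arg Subtype.val x.2⟩)
      fun x y hxy ↦ Subtype.ext (Subtype.ext (Subtype.mk.inj hxy))
  calc Nat.card (ker (f ∘ₗ g)) = Nat.card (ker h) * Nat.card (range h) := by
        rw [Submodule.card_eq_card_quotient_mul_card (ker h),
          Nat.card_congr h.quotKerEquivRange.toEquiv, mul_comm]
    _ ≤ Nat.card (ker g) * Nat.card (ker f) :=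
        Nat.mul_le_mul hker (Nat.card_le_card_of_injective _ Subtype.val_injective)

theorem LinearMap.card_ker_pow_le (f : M →ₗ[R] M) (k : ℕ) :
    Nat.card (ker (f ^ k)) ≤ Nat.card (ker f) ^ k := by
  induction k with
  | zero => simp [Module.End.one_eq_id]
  | succ k ih =>
    calc Nat.card (ker (f ^ (k + 1))) ≤ Nat.card (ker f) * Nat.card (ker (f ^ k)) :=
          pow_succ f k ▸ card_ker_comp_le (f ^ k) f
      _ ≤ Nat.card (ker f) ^ (k + 1) := by rw [pow_succ']; gcongr

end Card

theorem one_sub_X_pow_pred_eq_geom_sum (p : ℕ) [Fact p.Prime] :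
    (1 - X : (ZMod p)[X]) ^ (p - 1) = ∑ i ∈ Finset.range p, X ^ i := by
  have hp : p - 1 + 1 = p := Nat.sub_add_cancel (Fact.out : p.Prime).one_le
  have hX : (1 - X : (ZMod p)[X]) ≠ 0 := by
    rw [← neg_sub, neg_ne_zero, ← C_1]
    exact X_sub_C_ne_zero 1
  refine mul_left_cancel₀ hX ?_
  rw [← pow_succ', hp, sub_pow_char, one_pow, mul_neg_geom_sum]

theorem natCast_dvd_one_sub_X_pow_pred_sub_geom_sum (p : ℕ) [Fact p.Prime] :
    (p : ℤ[X]) ∣ (1 - X) ^ (p - 1) - ∑ i ∈ Finset.range p, X ^ i := by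
  rw [← C_eq_natCast, C_dvd_iff_dvd_coeff]
  have hmod :
      map (Int.castRingHom (ZMod p)) ((1 - X) ^ (p - 1) - ∑ i ∈ Finset.range p, X ^ i) = 0 := by
    simp [Polynomial.map_sum, one_sub_X_pow_pred_eq_geom_sum]
  intro i
  rw [← ZMod.intCast_zmod_eq_zero_iff_dvd, ← eq_intCast (Int.castRingHom (ZMod p)), ← coeff_map,
    hmod, coeff_zero]

theorem exists_one_sub_pow_pred_eq_mul {R : Type*} [Ring R] {p : ℕ} [Fact p.Prime] {s : R}
    (hs : ∑ i ∈ Finset.range p, s ^ i = 0) : ∃ u : R, (1 - s) ^ (p - 1) = p * u := by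
  obtain ⟨v, hv⟩ := natCast_dvd_one_sub_X_pow_pred_sub_geom_sum p
  refine ⟨aeval s v, ?_⟩
  simpa [hs] using congr_arg (aeval s) hv

theorem Module.End.nsmul_eq_zero_of_mem_ker_one_sub {R M : Type*} [Semiring R] [AddCommGroup M]
    [Module R M] {f : Module.End R M} {n : ℕ} (hf : ∑ i ∈ Finset.range n, f ^ i = 0) {x : M}
    (hx : x ∈ LinearMap.ker (1 - f)) : n • x = 0 := by
  have hfx : f x = x := (sub_eq_zero.mp hx).symm
  have hpow : ∀ i, (f ^ i) x = x := fun i ↦ by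
    rw [Module.End.pow_apply, Function.iterate_fixed hfx]
  simpa [LinearMap.sum_apply, hpow] using congr_arg (· x) hf

theorem pRank_le_of_norm_annihilates_general {p : ℕ} [Fact p.Prime] {M : Type*} [AddCommGroup M]
    [Module ℤ_[p] M] [Finite M] (σ : Module.End ℤ_[p] M)
    (hν : ∑ i ∈ Finset.range p, σ ^ i = 0) :
    pRankAdd p M ≤ (p - 1) * pRankAdd p ↥(LinearMap.ker (1 - σ)) := by
  obtain ⟨u, hu⟩ := exists_one_sub_pow_pred_eq_mul hν
  have hK : ∀ x : LinearMap.ker (1 - σ), p • x = 0 := fun x ↦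
    Subtype.ext (Module.End.nsmul_eq_zero_of_mem_ker_one_sub hν x.2)
  have hrange : ∀ x ∈ LinearMap.range ((1 - σ) ^ (p - 1)), ∃ y, p • y = x := by
    rintro _ ⟨x, rfl⟩
    exact ⟨u x, by simp [hu, Module.End.mul_apply]⟩
  refine (Nat.pow_le_pow_iff_right (Fact.out : p.Prime).one_lt).mp ?_
  calc p ^ pRankAdd p M ≤ Nat.card (M ⧸ LinearMap.range ((1 - σ) ^ (p - 1))) :=
        pow_pRankAdd_le_card_quotient p _ hrange
    _ = Nat.card (LinearMap.ker ((1 - σ) ^ (p - 1))) :=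
        LinearMap.card_quotient_range_eq_card_ker _
    _ ≤ Nat.card (LinearMap.ker (1 - σ)) ^ (p - 1) := LinearMap.card_ker_pow_le _ _
    _ = p ^ ((p - 1) * pRankAdd p (LinearMap.ker (1 - σ))) := by
        rw [← pow_pRankAdd_eq_card_of_nsmul_eq_zero p _ hK, ← pow_mul, mul_comm]

/-- Let `p` be a prime, `G = ⟨σ⟩` cyclic of order `p`, and `M` a finite
`ℤ_[p][G]`-module annihilated by the algebraic norm `ν = 1 + σ + ⋯ + σ^{p-1}`.
Then `rk_p(M) ≤ (p-1) · rk_p(M^G)`, where `M^G = ker (1 - σ)` is the submodule of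
`G`-fixed points. -/
theorem pRank_le_of_norm_annihilates {p : ℕ} [Fact p.Prime] {M : Type*} [AddCommGroup M]
    [Module ℤ_[p] M] [Finite M] (σ : Module.End ℤ_[p] M)
    (hσ : σ ^ p = 1) (hν : ∑ i ∈ Finset.range p, σ ^ i = 0) :
    pRankAdd p M ≤ (p - 1) * pRankAdd p ↥(LinearMap.ker (1 - σ)) :=
  pRank_le_of_norm_annihilates_general σ hν
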